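/- arXiv:2112.13248 — 7 statements merged into one kernel-verified Lean document; each statement's English description precedes it below -/
import Mathlib

section
/- For the couple (L^∞, L^∞(1/t)) of function spaces on (0,∞), where L^∞(1/t) has norm ‖f‖ = ess sup_{t>0} |f(t)|/t, the K-functional of any h ∈ L^∞ + L^∞(1/t) equals the least concave majorant of |h| on (0,∞). -/
open MeasureTheory

/-- The reference measure: Lebesgue measure on `(0,∞)`. -/
noncomputable def muIoi : Measure ℝ := volume.restrict (Set.Ioi (0 : ℝ))

/-- The `L^∞` norm on `(0,∞)` (essential sup), as an infimum of a.e. bounds. -/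
noncomputable def linfNorm (f : ℝ → ℝ) : ℝ :=
  sInf {c : ℝ | 0 ≤ c ∧ ∀ᵐ s ∂muIoi, |f s| ≤ c}

/-- The `L^∞(1/t)` norm on `(0,∞)`: `ess sup_{s>0} |f s| / s`. -/
noncomputable def linfWNorm (f : ℝ → ℝ) : ℝ :=
  sInf {c : ℝ | 0 ≤ c ∧ ∀ᵐ s ∂muIoi, |f s| ≤ c * s}

/-- Membership in `L^∞` on `(0,∞)`. -/
def memLinf (f : ℝ → ℝ) : Prop := ∃ c : ℝ, 0 ≤ c ∧ ∀ᵐ s ∂muIoi, |f s| ≤ c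

/-- Membership in `L^∞(1/t)` on `(0,∞)`. -/
def memLinfW (f : ℝ → ℝ) : Prop := ∃ c : ℝ, 0 ≤ c ∧ ∀ᵐ s ∂muIoi, |f s| ≤ c * s

/-- The K-functional of the couple `(L^∞, L^∞(1/t))`. -/
noncomputable def Klinf (t : ℝ) (h : ℝ → ℝ) : ℝ :=
  sInf {r : ℝ | ∃ h0 h1 : ℝ → ℝ, h = h0 + h1 ∧ memLinf h0 ∧ memLinfW h1 ∧
    r = linfNorm h0 + t * linfWNorm h1}

lemma linfNorm_nonneg (f : ℝ → ℝ) : 0 ≤ linfNorm f :=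
  Real.sInf_nonneg (fun _ hx => hx.1)

lemma linfWNorm_nonneg (f : ℝ → ℝ) : 0 ≤ linfWNorm f :=
  Real.sInf_nonneg (fun _ hx => hx.1)

lemma ae_le_linfNorm (f : ℝ → ℝ) (hf : memLinf f) : ∀ᵐ s ∂muIoi, |f s| ≤ linfNorm f := by
  set S : Set ℝ := {c : ℝ | 0 ≤ c ∧ ∀ᵐ s ∂muIoi, |f s| ≤ c} with hS
  have hne : S.Nonempty := hf
  have hn : ∀ n : ℕ, ∀ᵐ s ∂muIoi, |f s| ≤ sInf S + 1 / (n + 1) := by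
    intro n
    have hlt0 : sInf S < sInf S + 1 / ((n:ℝ) + 1) :=
      lt_add_of_pos_right _ (by positivity)
    obtain ⟨c, hcS, hlt⟩ := exists_lt_of_csInf_lt hne hlt0
    filter_upwards [hcS.2] with s hs using hs.trans hlt.le
  filter_upwards [ae_all_iff.2 hn] with s hs
  have htend : Filter.Tendsto (fun n : ℕ => sInf S + 1 / ((n:ℝ) + 1)) Filter.atTop
      (nhds (sInf S + 0)) :=
    Filter.Tendsto.add tendsto_const_nhds tendsto_one_div_add_atTop_nhds_zero_nat
  rw [add_zero] at htend
  exact ge_of_tendsto' htend hs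

lemma ae_le_linfWNorm (f : ℝ → ℝ) (hf : memLinfW f) :
    ∀ᵐ s ∂muIoi, |f s| ≤ linfWNorm f * s := by
  set S : Set ℝ := {c : ℝ | 0 ≤ c ∧ ∀ᵐ s ∂muIoi, |f s| ≤ c * s} with hS
  have hne : S.Nonempty := hf
  have hn : ∀ n : ℕ, ∀ᵐ s ∂muIoi, |f s| ≤ (sInf S + 1 / (n + 1)) * s := by
    intro n
    have hlt0 : sInf S < sInf S + 1 / ((n:ℝ) + 1) :=
      lt_add_of_pos_right _ (by positivity)
    obtain ⟨c, hcS, hlt⟩ := exists_lt_of_csInf_lt hne hlt0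
    filter_upwards [hcS.2, ae_restrict_mem measurableSet_Ioi] with s hs hs0
    exact hs.trans (mul_le_mul_of_nonneg_right hlt.le (le_of_lt hs0))
  filter_upwards [ae_all_iff.2 hn] with s hs
  have htend : Filter.Tendsto (fun n : ℕ => (sInf S + 1 / ((n:ℝ) + 1)) * s) Filter.atTop
      (nhds ((sInf S + 0) * s)) :=
    Filter.Tendsto.mul_const s
      (Filter.Tendsto.add tendsto_const_nhds tendsto_one_div_add_atTop_nhds_zero_nat)
  rw [add_zero] at htend
  exact ge_of_tendsto' htend hs

lemma affine_concaveOn (A B : ℝ) : ConcaveOn ℝ (Set.Ici 0) (fun s => A + B * s) := by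
  refine ⟨convex_Ici 0, ?_⟩
  intro x _ y _ p q hp hq hpq
  simp only [smul_eq_mul]
  apply le_of_eq
  linear_combination A * hpq

/-- For the couple `(L^∞, L^∞(1/t))` on `(0,∞)`, the K-functional of
any `h ∈ L^∞ + L^∞(1/t)` equals the least concave majorant `G` of `|h|`
on `(0,∞)`. -/
theorem Kfunctional_linf_couple_eq_least_concave_majorant
    (h G : ℝ → ℝ)
    (hmem : ∃ h0 h1 : ℝ → ℝ, h = h0 + h1 ∧ memLinf h0 ∧ memLinfW h1)
    (hGconc : ConcaveOn ℝ (Set.Ici 0) G)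
    (hGmaj : ∀ᵐ s ∂muIoi, |h s| ≤ G s)
    (hGleast : ∀ G' : ℝ → ℝ, ConcaveOn ℝ (Set.Ici 0) G' →
      (∀ᵐ s ∂muIoi, |h s| ≤ G' s) → ∀ t : ℝ, 0 < t → G t ≤ G' t) :
    ∀ t : ℝ, 0 < t → Klinf t h = G t := by
  -- G is nonnegative somewhere in every interval
  have haeG : ∀ᵐ s ∂muIoi, 0 ≤ G s := hGmaj.mono fun s hs => le_trans (abs_nonneg _) hs
  have hexists : ∀ x y : ℝ, 0 ≤ x → x < y → ∃ s, s ∈ Set.Ioo x y ∧ 0 ≤ G s := by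
    intro x y hx hxy
    by_contra hcon
    push_neg at hcon
    have hsub : Set.Ioo x y ⊆ {s : ℝ | ¬ 0 ≤ G s} := by
      intro s hs; exact not_le.2 (hcon s hs)
    have h0 : muIoi (Set.Ioo x y) = 0 := measure_mono_null hsub haeG
    rw [muIoi, Measure.restrict_apply measurableSet_Ioo] at h0
    have hinter : Set.Ioo x y ∩ Set.Ioi 0 = Set.Ioo x y := by
      apply Set.inter_eq_left.2
      intro s hs
      exact lt_of_le_of_lt hx hs.1
    rw [hinter, Real.volume_Ioo] at h0
    have : y - x ≤ 0 := by
      by_contra hyx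
      push_neg at hyx
      rw [ENNReal.ofReal_eq_zero] at h0
      linarith
    linarith
  -- G is nonnegative on (0,∞)
  have hGnn : ∀ t : ℝ, 0 < t → 0 ≤ G t := by
    intro t ht
    obtain ⟨s1, hs1m, hs1⟩ := hexists 0 t le_rfl ht
    obtain ⟨s2, hs2m, hs2⟩ := hexists t (t + 1) ht.le (by linarith)
    have h12 : s1 < s2 := hs1m.2.trans hs2m.1
    have hden : 0 < s2 - s1 := by linarith
    have hw1 : (0:ℝ) ≤ (s2 - t) / (s2 - s1) := by
      have : 0 ≤ s2 - t := by linarith [hs2m.1]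
      positivity
    have hw2 : (0:ℝ) ≤ (t - s1) / (s2 - s1) := by
      have : 0 ≤ t - s1 := by linarith [hs1m.2]
      positivity
    have hw3 : (s2 - t) / (s2 - s1) + (t - s1) / (s2 - s1) = 1 := by
      field_simp
      ring
    have hc := hGconc.2 (Set.mem_Ici.2 hs1m.1.le) (Set.mem_Ici.2 (le_trans ht.le hs2m.1.le))
      hw1 hw2 hw3
    have hcomb : ((s2 - t) / (s2 - s1)) • s1 + ((t - s1) / (s2 - s1)) • s2 = t := by
      simp only [smul_eq_mul]
      field_simp
      ring
    rw [hcomb] at hc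
    have h1 : 0 ≤ ((s2 - t) / (s2 - s1)) • G s1 := by
      simp only [smul_eq_mul]; exact mul_nonneg hw1 hs1
    have h2 : 0 ≤ ((t - s1) / (s2 - s1)) • G s2 := by
      simp only [smul_eq_mul]; exact mul_nonneg hw2 hs2
    linarith
  intro t ht
  -- the decomposition set
  set S : Set ℝ := {r : ℝ | ∃ h0 h1 : ℝ → ℝ, h = h0 + h1 ∧ memLinf h0 ∧ memLinfW h1 ∧
    r = linfNorm h0 + t * linfWNorm h1} with hSdef
  have hSne : S.Nonempty := by
    obtain ⟨h0, h1, hsum, hm0, hm1⟩ := hmem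
    exact ⟨linfNorm h0 + t * linfWNorm h1, h0, h1, hsum, hm0, hm1, rfl⟩
  have hSbdd : BddBelow S := by
    refine ⟨0, fun r hr => ?_⟩
    obtain ⟨h0, h1, _, _, _, hr⟩ := hr
    have := linfNorm_nonneg h0
    have := linfWNorm_nonneg h1
    nlinarith
  -- Lower bound: G t ≤ every element of S
  have hlow : G t ≤ Klinf t h := by
    apply le_csInf hSne
    rintro r ⟨h0, h1, hsum, hm0, hm1, rfl⟩
    set A := linfNorm h0
    set B := linfWNorm h1
    have hbound : ∀ᵐ s ∂muIoi, |h s| ≤ A + B * s := by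
      filter_upwards [ae_le_linfNorm h0 hm0, ae_le_linfWNorm h1 hm1] with s hs0 hs1
      have : |h s| ≤ |h0 s| + |h1 s| := by
        rw [hsum]; exact abs_add_le _ _
      linarith
    have := hGleast (fun s => A + B * s) (affine_concaveOn A B) hbound t ht
    simpa [mul_comm] using this
  -- Upper bound: construct a supporting line of G at t
  -- b = sup of right slopes
  set T : Set ℝ := {z : ℝ | ∃ u : ℝ, t < u ∧ z = (G u - G t) / (u - t)} with hTdef
  have hTne : T.Nonempty := ⟨(G (t+1) - G t) / (t + 1 - t), t + 1, by linarith, rfl⟩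
  have hTbdd : BddAbove T := by
    refine ⟨(G t - G (t/2)) / (t - t/2), ?_⟩
    rintro z ⟨u, hu, rfl⟩
    exact hGconc.slope_anti_adjacent (Set.mem_Ici.2 (by linarith)) (Set.mem_Ici.2 (by linarith))
      (by linarith) hu
  set b := sSup T with hbdef
  -- the supporting line property
  have hline : ∀ s : ℝ, 0 ≤ s → G s ≤ G t + b * (s - t) := by
    intro s hs
    rcases lt_trichotomy s t with hst | hst | hst
    · have hb : b ≤ (G t - G s) / (t - s) := by
        apply csSup_le hTne
        rintro z ⟨u, hu, rfl⟩
        exact hGconc.slope_anti_adjacent (Set.mem_Ici.2 hs) (Set.mem_Ici.2 (by linarith))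
          hst hu
      have hpos : 0 < t - s := by linarith
      have := (le_div_iff₀ hpos).1 hb
      nlinarith
    · rw [hst]; simp
    · have hb : (G s - G t) / (s - t) ≤ b := le_csSup hTbdd ⟨s, hst, rfl⟩
      have hpos : 0 < s - t := by linarith
      have := (div_le_iff₀ hpos).1 hb
      nlinarith
  -- b ≥ 0
  have hbnn : 0 ≤ b := by
    by_contra hb
    push_neg at hb
    have hnb : (0:ℝ) < -b := by linarith
    have hGt : 0 ≤ G t := hGnn t ht
    have hq : 0 ≤ G t / (-b) := by positivity
    obtain ⟨s, hsm, hsG⟩ := hexists (t + G t / (-b)) (t + G t / (-b) + 1)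
      (by linarith) (by linarith)
    have hls := hline s (by linarith [hsm.1])
    have hdiv : (-b) * (G t / (-b)) = G t :=
      mul_div_cancel₀ _ (ne_of_gt hnb)
    have hmul : (-b) * (t + G t / (-b)) < (-b) * s :=
      mul_lt_mul_of_pos_left hsm.1 hnb
    rw [mul_add, hdiv] at hmul
    nlinarith
  set a := G t - b * t with hadef
  have hann : 0 ≤ a := by
    by_contra ha
    push_neg at ha
    have hbpos : 0 < b := by
      rcases eq_or_lt_of_le hbnn with hb0 | hb0
      · exfalso
        have := hGnn t ht
        rw [hadef, ← hb0] at ha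
        linarith
      · exact hb0
    set s := min (t / 2) (-a / (2 * b)) with hsdef
    have hspos : 0 < s := by
      apply lt_min (by linarith)
      have : (0:ℝ) < -a := by linarith
      positivity
    have hls := hline s hspos.le
    have hsG : 0 ≤ G s := hGnn s hspos
    have hsle : s ≤ -a / (2 * b) := min_le_right _ _
    have : b * s ≤ -a / 2 := by
      rw [le_div_iff₀ (by norm_num : (0:ℝ) < 2)]
      have := (le_div_iff₀ (by positivity : (0:ℝ) < 2 * b)).1 hsle
      nlinarith
    nlinarith
  -- the decomposition
  have hupper : Klinf t h ≤ G t := by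
    set h0 : ℝ → ℝ := fun s => max (-a) (min (h s) a) with h0def
    set h1 : ℝ → ℝ := fun s => h s - h0 s with h1def
    have hsum : h = h0 + h1 := by
      funext s; simp [h1def]
    have hb0 : ∀ s, |h0 s| ≤ a := by
      intro s
      rw [abs_le]
      exact ⟨le_max_left _ _, max_le (by linarith) (min_le_right _ _)⟩
    have hb1 : ∀ᵐ s ∂muIoi, |h1 s| ≤ b * s := by
      filter_upwards [hGmaj, ae_restrict_mem measurableSet_Ioi] with s hs hs0
      have hsl : |h s| ≤ a + b * s := by
        have := hline s (le_of_lt hs0)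
        have : G s ≤ a + b * s := by rw [hadef]; linarith
        linarith
      have habs := abs_le.1 hsl
      have hbs : 0 ≤ b * s := mul_nonneg hbnn (le_of_lt hs0)
      show |h s - max (-a) (min (h s) a)| ≤ b * s
      rcases le_total (h s) a with hc1 | hc1
      · rcases le_total (-a) (h s) with hc2 | hc2
        · rw [min_eq_left hc1, max_eq_right hc2]
          simpa using hbs
        · rw [min_eq_left hc1, max_eq_left hc2]
          rw [abs_le]
          constructor <;> [skip; skip] <;>
            · obtain ⟨ha1, ha2⟩ := habs
              linarith
      · rw [min_eq_right hc1, max_eq_right (by linarith : -a ≤ a)]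
        rw [abs_le]
        constructor <;> [skip; skip] <;>
          · obtain ⟨ha1, ha2⟩ := habs
            linarith
    have hm0 : memLinf h0 := ⟨a, hann, ae_of_all _ hb0⟩
    have hm1 : memLinfW h1 := ⟨b, hbnn, hb1⟩
    have hn0 : linfNorm h0 ≤ a :=
      csInf_le ⟨0, fun x hx => hx.1⟩ ⟨hann, ae_of_all _ hb0⟩
    have hn1 : linfWNorm h1 ≤ b :=
      csInf_le ⟨0, fun x hx => hx.1⟩ ⟨hbnn, hb1⟩
    have hmem' : linfNorm h0 + t * linfWNorm h1 ∈ S := ⟨h0, h1, hsum, hm0, hm1, rfl⟩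
    have hKle : Klinf t h ≤ linfNorm h0 + t * linfWNorm h1 := csInf_le hSbdd hmem'
    have : linfNorm h0 + t * linfWNorm h1 ≤ a + t * b := by
      have := mul_le_mul_of_nonneg_left hn1 ht.le
      linarith
    rw [hadef] at this
    nlinarith
  exact le_antisymm hupper hlow
end

section
/- Let X be a Banach lattice, y ∈ X and yₙ ∈ X nonnegative with Σₙ yₙ convergent in X and 0 ≤ y ≤ Σₙ yₙ. Then there exist zₙ ∈ X with 0 ≤ zₙ ≤ yₙ for all n and y = Σₙ zₙ (convergence in X). -/
open Filter Finset Topology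

/-- Let `X` be a Banach lattice, `y ∈ X` and `yₙ ∈ X` nonnegative
with `Σₙ yₙ` convergent in `X` and `0 ≤ y ≤ Σₙ yₙ`. Then there exist `zₙ ∈ X`
with `0 ≤ zₙ ≤ yₙ` for all `n` and `y = Σₙ zₙ` (convergence in `X`). -/
theorem infinite_riesz_decomposition {X : Type*}
    [NormedAddCommGroup X] [Lattice X] [HasSolidNorm X] [IsOrderedAddMonoid X]
    [CompleteSpace X]
    (y : X) (yn : ℕ → X) (hpos : ∀ n, 0 ≤ yn n) (hsum : Summable yn)
    (hy0 : 0 ≤ y) (hy : y ≤ ∑' n, yn n) :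
    ∃ z : ℕ → X, (∀ n, 0 ≤ z n ∧ z n ≤ yn n) ∧ HasSum z y := by
  classical
  -- remainders
  set r : ℕ → X := fun n => Nat.rec y (fun n rn => rn - rn ⊓ yn n) n with hr
  set z : ℕ → X := fun n => r n ⊓ yn n with hz
  have hr0 : r 0 = y := rfl
  have hrsucc : ∀ n, r (n + 1) = r n - z n := fun n => rfl
  -- positivity of remainders
  have hrpos : ∀ n, 0 ≤ r n := by
    intro n
    induction n with
    | zero => exact hy0
    | succ n ih =>
      rw [hrsucc]
      exact sub_nonneg.2 (inf_le_left (a := r n) (b := yn n))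
  have hzpos : ∀ n, 0 ≤ z n := fun n => le_inf (hrpos n) (hpos n)
  have hzle : ∀ n, z n ≤ yn n := fun n => inf_le_right
  -- tails
  set T : ℕ → X := fun n => ∑' k, yn (k + n) with hT
  have hTsummable : ∀ n, Summable fun k => yn (k + n) := fun n =>
    (summable_nat_add_iff n).2 hsum
  have hTpos : ∀ n, 0 ≤ T n := fun n => tsum_nonneg fun k => hpos _
  have hTrec : ∀ n, T n = yn n + T (n + 1) := by
    intro n
    have h := Summable.tsum_eq_zero_add (hTsummable n)
    simp only [zero_add] at h
    rw [hT]
    simp only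
    rw [h]
    congr 1
    apply tsum_congr
    intro k
    congr 1
    omega
  -- r n ≤ T n
  have hrT : ∀ n, r n ≤ T n := by
    intro n
    induction n with
    | zero =>
      refine hy.trans (le_of_eq ?_)
      exact tsum_congr fun k => by simp
    | succ n ih =>
      rw [hrsucc, hz]
      simp only
      rw [sub_inf, sub_self]
      refine sup_le (hTpos _) ?_
      have : r n ≤ yn n + T (n + 1) := ih.trans (hTrec n).le
      exact sub_le_iff_le_add'.2 this
  -- tails tend to zero
  have hTto : Tendsto T atTop (𝓝 (0 : X)) := tendsto_sum_nat_add yn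
  -- remainders tend to zero
  have hrto : Tendsto r atTop (𝓝 (0 : X)) := by
    rw [tendsto_zero_iff_norm_tendsto_zero]
    refine squeeze_zero (fun n => norm_nonneg _) (fun n => ?_)
      (tendsto_zero_iff_norm_tendsto_zero.1 hTto)
    refine HasSolidNorm.solid ?_
    rw [abs_of_nonneg (hrpos n), abs_of_nonneg (hTpos n)]
    exact hrT n
  -- partial sums
  have hpartial : ∀ n, ∑ i ∈ range n, z i = y - r n := by
    intro n
    induction n with
    | zero => simp [hr0]
    | succ n ih =>
      rw [Finset.sum_range_succ, ih, hrsucc]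
      abel
  -- summability of z
  have hzsummable : Summable z := by
    rw [summable_iff_vanishing_norm]
    intro ε hε
    obtain ⟨s, hs⟩ := summable_iff_vanishing_norm.1 hsum ε hε
    refine ⟨s, fun t ht => ?_⟩
    refine lt_of_le_of_lt ?_ (hs t ht)
    refine HasSolidNorm.solid ?_
    have h1 : (0 : X) ≤ ∑ i ∈ t, z i := Finset.sum_nonneg fun i _ => hzpos i
    have h2 : (0 : X) ≤ ∑ i ∈ t, yn i := Finset.sum_nonneg fun i _ => hpos i
    rw [abs_of_nonneg h1, abs_of_nonneg h2]
    exact Finset.sum_le_sum fun i _ => hzle i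
  obtain ⟨a, ha⟩ := hzsummable
  have h1 : Tendsto (fun n => ∑ i ∈ range n, z i) atTop (𝓝 a) := ha.tendsto_sum_nat
  have h2 : Tendsto (fun n => ∑ i ∈ range n, z i) atTop (𝓝 y) := by
    have : Tendsto (fun n => y - r n) atTop (𝓝 (y - 0)) := tendsto_const_nhds.sub hrto
    simpa [hpartial] using this
  have : a = y := tendsto_nhds_unique h1 h2
  exact ⟨z, fun n => ⟨hzpos n, hzle n⟩, this ▸ ha⟩
end

section
/- Let 0 < p ≤ 1 and let φᵢ : [0,∞) → [0,∞), i = 1,2,…, be concave nondecreasing functions with φᵢ(0) = 0 and Σᵢ φᵢ(1)^p < ∞. Then the function φ(t) = (Σᵢ φᵢ(t)^p)^{1/p} is finite for all t ≥ 0, nondecreasing, concave, and φ(0) = 0. -/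
open Real

/-- Reverse Minkowski-type inequality for `ℓ^p` sums, `0 < p ≤ 1`. -/
theorem key_rev_mink (p : ℝ) (hp0 : 0 < p) (hp1 : p ≤ 1)
    (u v : ℕ → ℝ) (hu : ∀ i, 0 ≤ u i) (hv : ∀ i, 0 ≤ v i)
    (hsu : Summable fun i => u i ^ p) (hsv : Summable fun i => v i ^ p)
    (a b : ℝ) (ha : 0 ≤ a) (hb : 0 ≤ b) (hab : a + b = 1)
    (hsw : Summable fun i => (a * u i + b * v i) ^ p) :
    a * (∑' i, u i ^ p) ^ (1 / p) + b * (∑' i, v i ^ p) ^ (1 / p)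
      ≤ (∑' i, (a * u i + b * v i) ^ p) ^ (1 / p) := by
  have hcancel : ∀ x : ℝ, 0 ≤ x → (x ^ (1 / p)) ^ p = x := by
    intro x hx
    rw [← Real.rpow_mul hx, one_div_mul_cancel hp0.ne', Real.rpow_one]
  set Su := ∑' i, u i ^ p with hSu
  set Sv := ∑' i, v i ^ p with hSv
  have hSu0 : 0 ≤ Su := tsum_nonneg fun i => Real.rpow_nonneg (hu i) p
  have hSv0 : 0 ≤ Sv := tsum_nonneg fun i => Real.rpow_nonneg (hv i) p
  set A := Su ^ (1 / p) with hA
  set B := Sv ^ (1 / p) with hB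
  have hA0 : 0 ≤ A := Real.rpow_nonneg hSu0 _
  have hB0 : 0 ≤ B := Real.rpow_nonneg hSv0 _
  have hApow : A ^ p = Su := hcancel _ hSu0
  have hBpow : B ^ p = Sv := hcancel _ hSv0
  set c := a * A + b * B with hc
  have hc0 : 0 ≤ c := by positivity
  have hSw0 : 0 ≤ ∑' i, (a * u i + b * v i) ^ p :=
    tsum_nonneg fun i => Real.rpow_nonneg (by have := hu i; have := hv i; positivity) p
  rcases eq_or_lt_of_le hc0 with hceq | hcpos
  · calc c = 0 := hceq.symm
      _ ≤ _ := Real.rpow_nonneg hSw0 _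
  -- u i = 0 when Su = 0, etc.
  have huz : Su = 0 → ∀ i, u i = 0 := by
    intro h i
    by_contra hne
    have hpos : 0 < u i := lt_of_le_of_ne (hu i) (Ne.symm hne)
    have h1 : u i ^ p ≤ Su := Summable.le_tsum hsu i fun j _ => Real.rpow_nonneg (hu j) p
    have := Real.rpow_pos_of_pos hpos p
    linarith [h ▸ h1]
  have hvz : Sv = 0 → ∀ i, v i = 0 := by
    intro h i
    by_contra hne
    have hpos : 0 < v i := lt_of_le_of_ne (hv i) (Ne.symm hne)
    have h1 : v i ^ p ≤ Sv := Summable.le_tsum hsv i fun j _ => Real.rpow_nonneg (hv j) p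
    have := Real.rpow_pos_of_pos hpos p
    linarith [h ▸ h1]
  set l := a * A / c with hl
  set m := b * B / c with hm
  have hl0 : 0 ≤ l := by positivity
  have hm0 : 0 ≤ m := by positivity
  have hlm : l + m = 1 := by
    rw [hl, hm, ← add_div]; exact div_self hcpos.ne'
  -- pointwise rewrite of the convex combination
  have hrewA : ∀ i, l * (c * u i / A) = a * u i := by
    intro i
    rcases eq_or_lt_of_le hA0 with h | h
    · have hSuz : Su = 0 := by
        by_contra hne
        exact hne (by rw [← hApow, ← h, Real.zero_rpow hp0.ne'])
      rw [huz hSuz i]; simp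
    · field_simp [hl]
      rw [hl, div_mul_cancel₀ _ hcpos.ne']; ring
  have hrewB : ∀ i, m * (c * v i / B) = b * v i := by
    intro i
    rcases eq_or_lt_of_le hB0 with h | h
    · have hSvz : Sv = 0 := by
        by_contra hne
        exact hne (by rw [← hBpow, ← h, Real.zero_rpow hp0.ne'])
      rw [hvz hSvz i]; simp
    · field_simp [hm]
      rw [hm, div_mul_cancel₀ _ hcpos.ne']; ring
  -- pointwise concavity inequality
  have point : ∀ i, l * (c * u i / A) ^ p + m * (c * v i / B) ^ p
      ≤ (a * u i + b * v i) ^ p := by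
    intro i
    have hui := hu i
    have hvi := hv i
    have hcu : c * u i / A ∈ Set.Ici (0 : ℝ) := by
      simp only [Set.mem_Ici]; positivity
    have hcv : c * v i / B ∈ Set.Ici (0 : ℝ) := by
      simp only [Set.mem_Ici]; positivity
    have := (Real.concaveOn_rpow hp0.le hp1).2 hcu hcv hl0 hm0 hlm
    simp only [smul_eq_mul] at this
    rwa [hrewA i, hrewB i] at this
  -- sum computation
  have hmulA : ∀ i, (c * u i / A) ^ p = (c / A) ^ p * u i ^ p := by
    intro i
    rw [show c * u i / A = (c / A) * u i by ring,
      Real.mul_rpow (by positivity) (hu i)]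
  have hmulB : ∀ i, (c * v i / B) ^ p = (c / B) ^ p * v i ^ p := by
    intro i
    rw [show c * v i / B = (c / B) * v i by ring,
      Real.mul_rpow (by positivity) (hv i)]
  have hsumA : Summable fun i => l * (c * u i / A) ^ p := by
    simp only [hmulA, ← mul_assoc]
    exact hsu.mul_left _
  have hsumB : Summable fun i => m * (c * v i / B) ^ p := by
    simp only [hmulB, ← mul_assoc]
    exact hsv.mul_left _
  have htermA : l * (c / A) ^ p * Su = l * c ^ p := by
    rcases eq_or_lt_of_le hA0 with h | h
    · have hSuz : Su = 0 := by
        by_contra hne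
        exact hne (by rw [← hApow, ← h, Real.zero_rpow hp0.ne'])
      have hlz : l = 0 := by rw [hl, ← h]; simp
      rw [hSuz, hlz]; ring
    · rw [Real.div_rpow hc0 hA0, hApow]
      have hSupos : 0 < Su := by
        rw [← hApow]; exact Real.rpow_pos_of_pos h p
      field_simp
  have htermB : m * (c / B) ^ p * Sv = m * c ^ p := by
    rcases eq_or_lt_of_le hB0 with h | h
    · have hSvz : Sv = 0 := by
        by_contra hne
        exact hne (by rw [← hBpow, ← h, Real.zero_rpow hp0.ne'])
      have hmz : m = 0 := by rw [hm, ← h]; simp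
      rw [hSvz, hmz]; ring
    · rw [Real.div_rpow hc0 hB0, hBpow]
      have hSvpos : 0 < Sv := by
        rw [← hBpow]; exact Real.rpow_pos_of_pos h p
      field_simp
  have main : c ^ p ≤ ∑' i, (a * u i + b * v i) ^ p := by
    have hsum_eq : ∑' i, (l * (c * u i / A) ^ p + m * (c * v i / B) ^ p) = c ^ p := by
      rw [Summable.tsum_add hsumA hsumB]
      have e1 : ∑' i, l * (c * u i / A) ^ p = l * (c / A) ^ p * Su := by
        simp only [hmulA, ← mul_assoc]
        rw [tsum_mul_left]
      have e2 : ∑' i, m * (c * v i / B) ^ p = m * (c / B) ^ p * Sv := by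
        simp only [hmulB, ← mul_assoc]
        rw [tsum_mul_left]
      rw [e1, e2, htermA, htermB, ← add_mul, hlm, one_mul]
    rw [← hsum_eq]
    exact Summable.tsum_le_tsum point (hsumA.add hsumB) hsw
  calc c = (c ^ p) ^ (1 / p) := by
        rw [← Real.rpow_mul hc0, mul_one_div_cancel hp0.ne', Real.rpow_one]
    _ ≤ _ := Real.rpow_le_rpow (Real.rpow_nonneg hc0 p) main (by positivity)

/-- Let `0 < p ≤ 1` and let `φᵢ : [0,∞) → [0,∞)` be concave
nondecreasing functions with `φᵢ 0 = 0` and `Σᵢ φᵢ(1)^p < ∞`. Then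
`φ t = (Σᵢ φᵢ(t)^p)^{1/p}` is finite (the series is summable) for every
`t ≥ 0`, nondecreasing, concave on `[0,∞)`, and `φ 0 = 0`. -/
theorem lp_sum_of_concave (p : ℝ) (hp0 : 0 < p) (hp1 : p ≤ 1)
    (φ : ℕ → ℝ → ℝ)
    (hconc : ∀ i, ConcaveOn ℝ (Set.Ici 0) (φ i))
    (hmono : ∀ i, MonotoneOn (φ i) (Set.Ici 0))
    (h0 : ∀ i, φ i 0 = 0)
    (hnn : ∀ i t, 0 ≤ t → 0 ≤ φ i t)
    (hsum : Summable fun i => φ i 1 ^ p) :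
    (∀ t : ℝ, 0 ≤ t → Summable fun i => φ i t ^ p) ∧
      MonotoneOn (fun t => (∑' i, φ i t ^ p) ^ (1 / p)) (Set.Ici 0) ∧
      ConcaveOn ℝ (Set.Ici 0) (fun t => (∑' i, φ i t ^ p) ^ (1 / p)) ∧
      (∑' i, φ i (0 : ℝ) ^ p) ^ (1 / p) = 0 := by
  -- bound φ i t ≤ max 1 t * φ i 1
  have hbound : ∀ i t, 0 ≤ t → φ i t ≤ max 1 t * φ i 1 := by
    intro i t ht
    rcases le_total t 1 with h | h
    · rw [max_eq_left h, one_mul]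
      exact hmono i (Set.mem_Ici.2 ht) (Set.mem_Ici.2 zero_le_one) h
    · rw [max_eq_right h]
      have htpos : 0 < t := lt_of_lt_of_le zero_lt_one h
      have := (hconc i).2 (Set.mem_Ici.2 ht) (Set.mem_Ici.2 le_rfl)
        (by positivity : (0:ℝ) ≤ 1 / t) (by
          rw [sub_nonneg]; exact div_le_one_of_le₀ h htpos.le)
        (by field_simp; ring : 1 / t + (1 - 1 / t) = 1)
      simp only [smul_eq_mul, h0 i, mul_zero, add_zero] at this
      rw [show (1:ℝ) / t * t = 1 by field_simp] at this
      calc φ i t = t * (1 / t * φ i t) := by field_simp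
        _ ≤ t * φ i 1 := by
            apply mul_le_mul_of_nonneg_left this htpos.le
  have hS : ∀ t : ℝ, 0 ≤ t → Summable fun i => φ i t ^ p := by
    intro t ht
    apply Summable.of_nonneg_of_le (fun i => Real.rpow_nonneg (hnn i t ht) p)
      (fun i => ?_) (hsum.mul_left ((max 1 t) ^ p))
    calc φ i t ^ p ≤ (max 1 t * φ i 1) ^ p :=
          Real.rpow_le_rpow (hnn i t ht) (hbound i t ht) hp0.le
      _ = (max 1 t) ^ p * φ i 1 ^ p :=
          Real.mul_rpow (le_trans zero_le_one (le_max_left _ _)) (hnn i 1 zero_le_one)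
  refine ⟨hS, ?_, ?_, ?_⟩
  · intro s hs t ht hst
    apply Real.rpow_le_rpow (tsum_nonneg fun i => Real.rpow_nonneg (hnn i s hs) p)
      ?_ (by positivity)
    exact Summable.tsum_le_tsum (fun i => Real.rpow_le_rpow (hnn i s hs)
      (hmono i hs ht hst) hp0.le) (hS s hs) (hS t ht)
  · refine ⟨convex_Ici 0, ?_⟩
    intro x hx y hy a b ha hb hab
    simp only [smul_eq_mul]
    have hxy : (0:ℝ) ≤ a * x + b * y := by
      have hx' : (0:ℝ) ≤ x := hx
      have hy' : (0:ℝ) ≤ y := hy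
      positivity
    have hptw : ∀ i, a * φ i x + b * φ i y ≤ φ i (a * x + b * y) := by
      intro i
      have := (hconc i).2 hx hy ha hb hab
      simpa only [smul_eq_mul] using this
    have hswsum : Summable fun i => (a * φ i x + b * φ i y) ^ p := by
      apply Summable.of_nonneg_of_le
        (fun i => Real.rpow_nonneg (by have := hnn i x hx; have := hnn i y hy; positivity) p)
        (fun i => Real.rpow_le_rpow (by have := hnn i x hx; have := hnn i y hy; positivity)
          (hptw i) hp0.le) (hS _ hxy)
    calc a * (∑' i, φ i x ^ p) ^ (1/p) + b * (∑' i, φ i y ^ p) ^ (1/p)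
        ≤ (∑' i, (a * φ i x + b * φ i y) ^ p) ^ (1/p) :=
          key_rev_mink p hp0 hp1 _ _ (fun i => hnn i x hx) (fun i => hnn i y hy)
            (hS x hx) (hS y hy) a b ha hb hab hswsum
      _ ≤ (∑' i, φ i (a * x + b * y) ^ p) ^ (1/p) := by
          apply Real.rpow_le_rpow
            (tsum_nonneg fun i => Real.rpow_nonneg (by
              have := hnn i x hx; have := hnn i y hy; positivity) p) ?_ (by positivity)
          exact Summable.tsum_le_tsum (fun i => Real.rpow_le_rpow
            (by have := hnn i x hx; have := hnn i y hy; positivity) (hptw i) hp0.le)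
            hswsum (hS _ hxy)
  · simp only [h0, Real.zero_rpow hp0.ne', tsum_zero]
    exact Real.zero_rpow (by positivity)
end

section
/- Let X be a quasi-Banach space that is finitely K(p,q)-monotone with respect to a p-normable quasi-Banach couple (X₀, X₁), where 0 < q ≤ p ≤ 1. Then X is q-normable: there is a constant C such that ‖Σᵢ₌₁ⁿ xᵢ‖_X ≤ C (Σᵢ₌₁ⁿ ‖xᵢ‖_X^q)^{1/q} for all finite families in X. -/
open Pointwise
set_option maxHeartbeats 1000000

/-- Let `X` be a quasi-Banach space (modelled by a membership
predicate `memX` and quasi-norm `NX` inside the sum of a couple) that is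
finitely `K(p,q)`-monotone with respect to a `p`-normable quasi-Banach couple
`(X₀, X₁)` (quasi-norms `N0, N1`), where `0 < q ≤ p ≤ 1`. Then `X` is
`q`-normable: there is `C'` with `‖Σᵢ xᵢ‖_X ≤ C' (Σᵢ ‖xᵢ‖_X^q)^{1/q}` for all
finite families in `X`. -/
theorem finitelyKpq_monotone_implies_q_normable {V : Type*} [AddCommGroup V]
    [Module ℝ V]
    (p q : ℝ) (hq0 : 0 < q) (hqp : q ≤ p) (hp1 : p ≤ 1)
    (N0 N1 : V → ℝ) (hN0 : ∀ v, 0 ≤ N0 v) (hN1 : ∀ v, 0 ≤ N1 v)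
    (hN0h : ∀ (a : ℝ) (v : V), N0 (a • v) = |a| * N0 v)
    (hN1h : ∀ (a : ℝ) (v : V), N1 (a • v) = |a| * N1 v)
    (B : ℝ) (hB : 0 < B)
    (hpn0 : ∀ (n : ℕ) (v : Fin n → V),
      N0 (∑ i, v i) ≤ B * (∑ i, N0 (v i) ^ p) ^ (1 / p))
    (hpn1 : ∀ (n : ℕ) (v : Fin n → V),
      N1 (∑ i, v i) ≤ B * (∑ i, N1 (v i) ^ p) ^ (1 / p))
    (K : ℝ → V → ℝ)
    (hK : ∀ t x, K t x =
      sInf {r : ℝ | ∃ x0 x1 : V, x = x0 + x1 ∧ r = N0 x0 + t * N1 x1})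
    (memX : V → Prop) (NX : V → ℝ)
    (hXnn : ∀ v, 0 ≤ NX v)
    (hXh : ∀ (a : ℝ) (v : V), NX (a • v) = |a| * NX v)
    (hXsmul : ∀ (a : ℝ) (v : V), memX v → memX (a • v))
    (C : ℝ) (hC : 0 < C)
    (hmon : ∀ (x : V) (n : ℕ) (xi : Fin n → V), (∀ i, memX (xi i)) →
      (∀ t : ℝ, 0 < t → K t x ≤ (∑ i, K t (xi i) ^ p) ^ (1 / p)) →
      memX x ∧ NX x ≤ C * (∑ i, NX (xi i) ^ q) ^ (1 / q)) :
    ∃ C' : ℝ, 0 < C' ∧ ∀ (n : ℕ) (xi : Fin n → V), (∀ i, memX (xi i)) →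
      NX (∑ i, xi i) ≤ C' * (∑ i, NX (xi i) ^ q) ^ (1 / q) := by
  classical
  have hp0 : (0:ℝ) < p := lt_of_lt_of_le hq0 hqp
  set S : ℝ → V → Set ℝ :=
    fun t v => {r : ℝ | ∃ x0 x1 : V, v = x0 + x1 ∧ r = N0 x0 + t * N1 x1} with hS
  have hSne : ∀ (t : ℝ) (v : V), (S t v).Nonempty := by
    intro t v
    exact ⟨N0 v + t * N1 0, v, 0, by simp, rfl⟩
  have hSbdd : ∀ (t : ℝ), 0 ≤ t → ∀ (v : V), BddBelow (S t v) := by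
    intro t ht v
    refine ⟨0, ?_⟩
    rintro r ⟨x0, x1, -, rfl⟩
    exact add_nonneg (hN0 _) (mul_nonneg ht (hN1 _))
  have hKnn : ∀ (t : ℝ), 0 ≤ t → ∀ v, 0 ≤ K t v := by
    intro t ht v
    rw [hK]
    refine le_csInf (hSne t v) ?_
    rintro r ⟨x0, x1, -, rfl⟩
    exact add_nonneg (hN0 _) (mul_nonneg ht (hN1 _))
  have hKle : ∀ (t : ℝ), 0 ≤ t → ∀ (v x0 x1 : V), v = x0 + x1 →
      K t v ≤ N0 x0 + t * N1 x1 := by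
    intro t ht v x0 x1 h
    rw [hK]
    exact csInf_le (hSbdd t ht v) ⟨x0, x1, h, rfl⟩
  -- scaling of K
  have hKsc_le : ∀ (a : ℝ), 0 < a → ∀ (t : ℝ), 0 ≤ t → ∀ v,
      K t (a • v) ≤ a * K t v := by
    intro a ha t ht v
    rw [hK, hK]
    have hsub : a • (S t v) ⊆ S t (a • v) := by
      rintro r ⟨r', ⟨x0, x1, rfl, rfl⟩, rfl⟩
      refine ⟨a • x0, a • x1, by rw [smul_add], ?_⟩
      simp only [hN0h, hN1h, abs_of_pos ha, smul_eq_mul]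
      ring
    calc sInf (S t (a • v)) ≤ sInf (a • S t v) :=
          csInf_le_csInf (hSbdd t ht _) ((hSne t v).smul_set) hsub
      _ = a * sInf (S t v) := by
          rw [Real.sInf_smul_of_nonneg ha.le, smul_eq_mul]
  have hKsc : ∀ (a : ℝ), 0 < a → ∀ (t : ℝ), 0 ≤ t → ∀ v,
      K t (a • v) = a * K t v := by
    intro a ha t ht v
    refine le_antisymm (hKsc_le a ha t ht v) ?_
    have h2 := hKsc_le a⁻¹ (inv_pos.2 ha) t ht (a • v)
    rw [inv_smul_smul₀ ha.ne'] at h2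
    calc a * K t v ≤ a * (a⁻¹ * K t (a • v)) :=
          mul_le_mul_of_nonneg_left h2 ha.le
      _ = K t (a • v) := by field_simp
  -- elementary rpow inequality
  have h2rpow : ∀ (u v s : ℝ), 0 ≤ u → 0 ≤ v → 0 ≤ s →
      (u + v) ^ s ≤ 2 ^ s * (u ^ s + v ^ s) := by
    intro u v s hu hv hs
    have h2s : (0:ℝ) ≤ 2 ^ s := Real.rpow_nonneg (by norm_num) s
    rcases le_total u v with h | h
    · calc (u + v) ^ s ≤ (2 * v) ^ s :=
            Real.rpow_le_rpow (by linarith) (by linarith) hs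
        _ = 2 ^ s * v ^ s := Real.mul_rpow (by norm_num) hv
        _ ≤ 2 ^ s * (u ^ s + v ^ s) :=
            mul_le_mul_of_nonneg_left (le_add_of_nonneg_left (Real.rpow_nonneg hu s)) h2s
    · calc (u + v) ^ s ≤ (2 * u) ^ s :=
            Real.rpow_le_rpow (by linarith) (by linarith) hs
        _ = 2 ^ s * u ^ s := Real.mul_rpow (by norm_num) hu
        _ ≤ 2 ^ s * (u ^ s + v ^ s) :=
            mul_le_mul_of_nonneg_left (le_add_of_nonneg_right (Real.rpow_nonneg hv s)) h2s
  set l : ℝ := 2 * B * (8:ℝ) ^ (1/p) with hl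
  have hlpos : 0 < l := by positivity
  -- main K-inequality
  have hmain : ∀ (n : ℕ) (xi : Fin n → V) (t : ℝ), 0 < t →
      K t (∑ i, xi i) ≤ l * (∑ i, K t (xi i) ^ p) ^ (1/p) := by
    intro n xi t ht
    set z := ∑ i, K t (xi i) ^ p with hzdef
    have hznn : 0 ≤ z :=
      Finset.sum_nonneg fun i _ => Real.rpow_nonneg (hKnn t ht.le _) p
    refine le_of_forall_pos_le_add ?_
    intro δ hδ
    set D : ℝ := 2 * B * (2:ℝ) ^ (1/p) * ((4 * (n:ℝ))) ^ (1/p) + 1 with hD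
    clear_value D
    have hDpos : 0 < D := by
      have h0 : (0:ℝ) ≤ 2 * B * (2:ℝ) ^ (1/p) * ((4 * (n:ℝ))) ^ (1/p) := by positivity
      rw [hD]; linarith
    set ε := δ / D with hε
    clear_value ε
    have hεpos : 0 < ε := hε ▸ div_pos hδ hDpos
    have hch : ∀ i : Fin n, ∃ x0 x1 : V, xi i = x0 + x1 ∧
        N0 x0 + t * N1 x1 < K t (xi i) + ε := by
      intro i
      obtain ⟨r, ⟨x0, x1, hdec, rfl⟩, hlt⟩ :=
        Real.lt_sInf_add_pos (hSne t (xi i)) hεpos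
      exact ⟨x0, x1, hdec, by rw [hK]; exact hlt⟩
    choose x0 x1 hdec hlt using hch
    have hsum : (∑ i, xi i) = (∑ i, x0 i) + ∑ i, x1 i := by
      rw [← Finset.sum_add_distrib]
      exact Finset.sum_congr rfl fun i _ => hdec i
    have h1 : K t (∑ i, xi i) ≤ N0 (∑ i, x0 i) + t * N1 (∑ i, x1 i) :=
      hKle t ht.le _ _ _ hsum
    set U := ∑ i, N0 (x0 i) ^ p with hU
    set W := ∑ i, (t * N1 (x1 i)) ^ p with hW
    have hUnn : 0 ≤ U := Finset.sum_nonneg fun i _ => Real.rpow_nonneg (hN0 _) p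
    have hWnn : 0 ≤ W := Finset.sum_nonneg fun i _ =>
      Real.rpow_nonneg (mul_nonneg ht.le (hN1 _)) p
    have h2 : N0 (∑ i, x0 i) ≤ B * U ^ (1/p) := hpn0 n x0
    have h3 : t * N1 (∑ i, x1 i) ≤ B * W ^ (1/p) := by
      have hps : p * (1/p) = 1 := mul_one_div_cancel hp0.ne'
      have hWeq : W = t ^ p * ∑ i, N1 (x1 i) ^ p := by
        rw [Finset.mul_sum]
        exact Finset.sum_congr rfl fun i _ => Real.mul_rpow ht.le (hN1 _)
      have hW13 : W ^ (1/p) = t * (∑ i, N1 (x1 i) ^ p) ^ (1/p) := by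
        rw [hWeq, Real.mul_rpow (Real.rpow_nonneg ht.le p)
          (Finset.sum_nonneg fun i _ => Real.rpow_nonneg (hN1 _) p),
          ← Real.rpow_mul ht.le, hps, Real.rpow_one]
      rw [hW13]
      calc t * N1 (∑ i, x1 i) ≤ t * (B * (∑ i, N1 (x1 i) ^ p) ^ (1/p)) :=
            mul_le_mul_of_nonneg_left (hpn1 n x1) ht.le
        _ = B * (t * (∑ i, N1 (x1 i) ^ p) ^ (1/p)) := by ring
    -- U + W ≤ 4 z + 4 n ε^p
    have h4 : U + W ≤ 4 * z + 4 * (n:ℝ) * ε ^ p := by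
      have step : ∀ i : Fin n,
          N0 (x0 i) ^ p + (t * N1 (x1 i)) ^ p ≤ 4 * (K t (xi i) ^ p + ε ^ p) := by
        intro i
        have hai : 0 ≤ N0 (x0 i) := hN0 _
        have hbi : 0 ≤ t * N1 (x1 i) := mul_nonneg ht.le (hN1 _)
        have hKi : 0 ≤ K t (xi i) := hKnn t ht.le _
        have e1 : N0 (x0 i) ^ p ≤ (N0 (x0 i) + t * N1 (x1 i)) ^ p :=
          Real.rpow_le_rpow hai (by linarith) hp0.le
        have e2 : (t * N1 (x1 i)) ^ p ≤ (N0 (x0 i) + t * N1 (x1 i)) ^ p :=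
          Real.rpow_le_rpow hbi (by linarith) hp0.le
        have e3 : (N0 (x0 i) + t * N1 (x1 i)) ^ p ≤ (K t (xi i) + ε) ^ p :=
          Real.rpow_le_rpow (by linarith) (hlt i).le hp0.le
        have e4 : (K t (xi i) + ε) ^ p ≤ 2 ^ p * (K t (xi i) ^ p + ε ^ p) :=
          h2rpow _ _ p hKi hεpos.le hp0.le
        have e5 : (2:ℝ) ^ p ≤ 2 := by
          calc (2:ℝ) ^ p ≤ (2:ℝ) ^ (1:ℝ) :=
                Real.rpow_le_rpow_of_exponent_le (by norm_num) hp1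
            _ = 2 := Real.rpow_one 2
        have e6 : (2:ℝ) ^ p * (K t (xi i) ^ p + ε ^ p) ≤
            2 * (K t (xi i) ^ p + ε ^ p) := by
          have : 0 ≤ K t (xi i) ^ p + ε ^ p :=
            add_nonneg (Real.rpow_nonneg hKi p) (Real.rpow_nonneg hεpos.le p)
          nlinarith
        nlinarith
      calc U + W = ∑ i, (N0 (x0 i) ^ p + (t * N1 (x1 i)) ^ p) := by
            rw [Finset.sum_add_distrib]
        _ ≤ ∑ i : Fin n, 4 * (K t (xi i) ^ p + ε ^ p) :=
            Finset.sum_le_sum fun i _ => step i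
        _ = 4 * z + 4 * (n:ℝ) * ε ^ p := by
            rw [← Finset.mul_sum, Finset.sum_add_distrib, Finset.sum_const]
            simp [hzdef]
            ring
    have hps : p * (1/p) = 1 := mul_one_div_cancel hp0.ne'
    have hεp : (ε ^ p) ^ (1/p) = ε := by
      rw [← Real.rpow_mul hεpos.le, hps, Real.rpow_one]
    have h6 : (U + W) ^ (1/p) ≤
        (2:ℝ) ^ (1/p) * ((4:ℝ) ^ (1/p) * z ^ (1/p) + (4 * (n:ℝ)) ^ (1/p) * ε) := by
      have t1 : (U + W) ^ (1/p) ≤ (4 * z + 4 * (n:ℝ) * ε ^ p) ^ (1/p) :=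
        Real.rpow_le_rpow (by linarith) h4 (by positivity)
      have h4z : (0:ℝ) ≤ 4 * z := by linarith
      have h4n : (0:ℝ) ≤ 4 * (n:ℝ) * ε ^ p := by positivity
      have t2 : (4 * z + 4 * (n:ℝ) * ε ^ p) ^ (1/p) ≤
          (2:ℝ) ^ (1/p) * ((4 * z) ^ (1/p) + (4 * (n:ℝ) * ε ^ p) ^ (1/p)) :=
        h2rpow _ _ (1/p) h4z h4n (by positivity)
      have t3 : (4 * z) ^ (1/p) = (4:ℝ) ^ (1/p) * z ^ (1/p) :=
        Real.mul_rpow (by norm_num) hznn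
      have t4 : (4 * (n:ℝ) * ε ^ p) ^ (1/p) = (4 * (n:ℝ)) ^ (1/p) * ε := by
        rw [Real.mul_rpow (by positivity) (Real.rpow_nonneg hεpos.le p), hεp]
      calc (U + W) ^ (1/p) ≤ (2:ℝ) ^ (1/p) * ((4 * z) ^ (1/p) + (4 * (n:ℝ) * ε ^ p) ^ (1/p)) :=
            le_trans t1 t2
        _ = (2:ℝ) ^ (1/p) * ((4:ℝ) ^ (1/p) * z ^ (1/p) + (4 * (n:ℝ)) ^ (1/p) * ε) := by
            rw [t3, t4]
    have h7 : U ^ (1/p) + W ^ (1/p) ≤ 2 * (U + W) ^ (1/p) := by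
      have u1 : U ^ (1/p) ≤ (U + W) ^ (1/p) :=
        Real.rpow_le_rpow hUnn (by linarith) (by positivity)
      have u2 : W ^ (1/p) ≤ (U + W) ^ (1/p) :=
        Real.rpow_le_rpow hWnn (by linarith) (by positivity)
      linarith
    have h8 : (2:ℝ) ^ (1/p) * (4:ℝ) ^ (1/p) = (8:ℝ) ^ (1/p) := by
      rw [← Real.mul_rpow (by norm_num) (by norm_num)]
      norm_num
    have hknn2 : 0 ≤ (U + W) ^ (1/p) := Real.rpow_nonneg (by linarith) _
    calc K t (∑ i, xi i) ≤ N0 (∑ i, x0 i) + t * N1 (∑ i, x1 i) := h1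
      _ ≤ B * U ^ (1/p) + B * W ^ (1/p) := by linarith
      _ = B * (U ^ (1/p) + W ^ (1/p)) := by ring
      _ ≤ B * (2 * (U + W) ^ (1/p)) := mul_le_mul_of_nonneg_left h7 hB.le
      _ ≤ B * (2 * ((2:ℝ) ^ (1/p) * ((4:ℝ) ^ (1/p) * z ^ (1/p) + (4 * (n:ℝ)) ^ (1/p) * ε))) := by
          have := mul_le_mul_of_nonneg_left h6 (by norm_num : (0:ℝ) ≤ 2)
          exact mul_le_mul_of_nonneg_left this hB.le
      _ = l * z ^ (1/p) + (2 * B * (2:ℝ) ^ (1/p) * ((4 * (n:ℝ))) ^ (1/p)) * ε := by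
          rw [hl, ← h8]; ring
      _ ≤ l * z ^ (1/p) + δ := by
          have hcoef : (2 * B * (2:ℝ) ^ (1/p) * ((4 * (n:ℝ))) ^ (1/p)) * ε ≤ D * ε := by
            have : 2 * B * (2:ℝ) ^ (1/p) * ((4 * (n:ℝ))) ^ (1/p) ≤ D := by
              rw [hD]; linarith
            exact mul_le_mul_of_nonneg_right this hεpos.le
          have hDε : D * ε = δ := by
            rw [hε]; field_simp
          linarith
  -- conclusion
  refine ⟨C * l, by positivity, ?_⟩
  intro n xi hmem
  have hcond : ∀ t : ℝ, 0 < t →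
      K t (∑ i, xi i) ≤ (∑ i, K t ((fun i => l • xi i) i) ^ p) ^ (1/p) := by
    intro t ht
    have hps : p * (1/p) = 1 := mul_one_div_cancel hp0.ne'
    have hsp : ∑ i, K t (l • xi i) ^ p = l ^ p * ∑ i, K t (xi i) ^ p := by
      rw [Finset.mul_sum]
      refine Finset.sum_congr rfl fun i _ => ?_
      rw [hKsc l hlpos t ht.le, Real.mul_rpow hlpos.le (hKnn t ht.le _)]
    have heq : (∑ i, K t (l • xi i) ^ p) ^ (1/p) = l * (∑ i, K t (xi i) ^ p) ^ (1/p) := by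
      rw [hsp, Real.mul_rpow (Real.rpow_nonneg hlpos.le p)
        (Finset.sum_nonneg fun i _ => Real.rpow_nonneg (hKnn t ht.le _) p),
        ← Real.rpow_mul hlpos.le, hps, Real.rpow_one]
    simp only [heq]
    exact hmain n xi t ht
  obtain ⟨-, hbound⟩ := hmon (∑ i, xi i) n (fun i => l • xi i)
    (fun i => hXsmul l _ (hmem i)) hcond
  · have hsq : ∑ i, NX (l • xi i) ^ q = l ^ q * ∑ i, NX (xi i) ^ q := by
      rw [Finset.mul_sum]
      refine Finset.sum_congr rfl fun i _ => ?_
      rw [hXh, abs_of_pos hlpos, Real.mul_rpow hlpos.le (hXnn _)]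
    have hqs : q * (1/q) = 1 := mul_one_div_cancel hq0.ne'
    have : (∑ i, NX (l • xi i) ^ q) ^ (1/q) = l * (∑ i, NX (xi i) ^ q) ^ (1/q) := by
      rw [hsq, Real.mul_rpow (Real.rpow_nonneg hlpos.le q)
        (Finset.sum_nonneg fun i _ => Real.rpow_nonneg (hXnn _) q),
        ← Real.rpow_mul hlpos.le, hqs, Real.rpow_one]
    rw [this] at hbound
    calc NX (∑ i, xi i) ≤ C * (l * (∑ i, NX (xi i) ^ q) ^ (1/q)) := hbound
      _ = C * l * (∑ i, NX (xi i) ^ q) ^ (1/q) := by ring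
end

section
/- Let 0 < q ≤ p ≤ 1, let E be a (p,q)-convex quasi-Banach function lattice on (0,∞) that is an exact interpolation space for the couple (L^∞, L^∞(1/t)), and let (X₀,X₁) be a quasi-Banach couple. Then the K-space X = (X₀,X₁)_{E:K}, with norm ‖x‖ = ‖K(·,x;X₀,X₁)‖_E, is finitely K(p,q)-monotone with constant at most the (p,q)-convexity constant M^{(p,q)}(E): if K(t,x) ≤ (Σᵢ₌₁ⁿ K(t,xᵢ)^p)^{1/p} for all t>0 with xᵢ ∈ X, then x ∈ X and ‖x‖ ≤ M^{(p,q)}(E)(Σᵢ‖xᵢ‖^q)^{1/q}. -/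
/-- Let `0 < q ≤ p ≤ 1`, let `E` be a `(p,q)`-convex quasi-Banach
function lattice on `(0,∞)` (modelled by a membership predicate `memE` and a
lattice quasi-norm `NE`) which is an exact interpolation space for the couple
`(L^∞, L^∞(1/t))`, and let `(X₀,X₁)` be a quasi-Banach couple with K-functional
`K`. Then the K-space `X = (X₀,X₁)_{E:K}`, with norm `‖x‖ = ‖K(·,x)‖_E`, is
finitely `K(p,q)`-monotone with constant at most `M^{(p,q)}(E)`: if
`K(t,x) ≤ (Σᵢ K(t,xᵢ)^p)^{1/p}` for all `t > 0` with `xᵢ ∈ X`, then `x ∈ X`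
and `‖x‖ ≤ M^{(p,q)}(E) (Σᵢ ‖xᵢ‖^q)^{1/q}`. -/
theorem Kspace_finitely_Kpq_monotone {V : Type*} [AddCommGroup V]
    (p q : ℝ) (hq0 : 0 < q) (hqp : q ≤ p) (hp1 : p ≤ 1)
    (K : ℝ → V → ℝ) (hKnn : ∀ t x, 0 ≤ K t x)
    (memE : (ℝ → ℝ) → Prop) (NE : (ℝ → ℝ) → ℝ)
    (M : ℝ) (hM : 0 ≤ M)
    -- E is a function lattice on (0,∞): monotone membership and quasi-norm
    (hmemMono : ∀ f g : ℝ → ℝ, (∀ t : ℝ, 0 < t → |f t| ≤ |g t|) →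
      memE g → memE f)
    (hNEmono : ∀ f g : ℝ → ℝ, (∀ t : ℝ, 0 < t → |f t| ≤ |g t|) →
      NE f ≤ NE g)
    -- E is closed under finite ℓ^p-sums
    (hmemSum : ∀ (n : ℕ) (f : Fin n → ℝ → ℝ), (∀ i, memE (f i)) →
      memE (fun t => (∑ i, |f i t| ^ p) ^ (1 / p)))
    -- (p,q)-convexity of E with constant M
    (hconv : ∀ (n : ℕ) (f : Fin n → ℝ → ℝ),
      NE (fun t => (∑ i, |f i t| ^ p) ^ (1 / p)) ≤
        M * (∑ i, NE (f i) ^ q) ^ (1 / q)) :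
    ∀ (x : V) (n : ℕ) (xi : Fin n → V),
      (∀ i, memE (fun t => K t (xi i))) →
      (∀ t : ℝ, 0 < t → K t x ≤ (∑ i, K t (xi i) ^ p) ^ (1 / p)) →
      memE (fun t => K t x) ∧
        NE (fun t => K t x) ≤
          M * (∑ i, NE (fun t => K t (xi i)) ^ q) ^ (1 / q) := by
  intro x n xi hmem hK
  have hle : ∀ t : ℝ, 0 < t → |K t x| ≤
      |(fun t => (∑ i, |K t (xi i)| ^ p) ^ (1 / p)) t| := by
    intro t ht
    have hsum : (∑ i, K t (xi i) ^ p) = ∑ i, |K t (xi i)| ^ p := by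
      refine Finset.sum_congr rfl fun i _ => ?_
      rw [abs_of_nonneg (hKnn t (xi i))]
    have h0 : (0:ℝ) ≤ (∑ i, |K t (xi i)| ^ p) ^ (1 / p) := by
      apply Real.rpow_nonneg
      exact Finset.sum_nonneg fun i _ => Real.rpow_nonneg (abs_nonneg _) _
    rw [abs_of_nonneg (hKnn t x), abs_of_nonneg h0]
    calc K t x ≤ (∑ i, K t (xi i) ^ p) ^ (1 / p) := hK t ht
      _ = _ := by rw [hsum]
  constructor
  · exact hmemMono _ _ hle (hmemSum n (fun i t => K t (xi i)) hmem)
  · exact le_trans (hNEmono _ _ hle) (hconv n (fun i t => K t (xi i)))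
end

section
/- Let (X₀,X₁) be a quasi-Banach couple such that X₀+X₁ (with quasi-norm x ↦ K(1,x)) is a p-convex quasi-Anach lattice with constant M, and let E be a quasi-Banach function lattice on (0,∞), r-convex with constant M^{(r)}(E), that is an intermediate lattice for (L^∞, L^∞(1/t)). If both the couple and E are r-convex, then the K-space (X₀,X₁)_{E:K} is r-convex: ‖(Σₖ|xₖ|^r)^{1/r}‖ ≤ M^{(r)}(Σ(X̄)) M^{(r)}(E) (Σₖ ‖xₖ‖^r)^{1/r}. In particular, if (X₀,X₁) is an L-convex quasi-Banach lattice couple and E is an L-convex lattice in Int(L^∞, L^∞(1/t)), then (X₀,X₁)_{E:K} is L-convex. -/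
/-- Let `(X₀,X₁)` be an `r`-convex quasi-Banach function lattice
couple (so that the quoted `r`-convexity estimate holds for the K-functional,
with constant `M^{(r)}(Σ(X̄)) = MS`), and let `E` be an `r`-convex quasi-Banach
function lattice on `(0,∞)` with constant `ME`, intermediate for
`(L^∞, L^∞(1/t))`. Then the K-space `(X₀,X₁)_{E:K}` is `r`-convex:
`‖(Σₖ |xₖ|^r)^{1/r}‖ ≤ MS * ME * (Σₖ ‖xₖ‖^r)^{1/r}`, where
`‖x‖ = ‖K(·,x)‖_E`. In particular, if the couple and `E` are `L`-convex (i.e.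
`r`-convex for some `r > 0` by Kalton's theorem), the K-space is `L`-convex. -/
theorem Kspace_r_convex {α : Type*} (r : ℝ) (hr : 0 < r)
    (K : ℝ → (α → ℝ) → ℝ) (hKnn : ∀ t f, 0 ≤ K t f)
    (MS ME : ℝ) (hMS : 0 ≤ MS) (hME : 0 ≤ ME)
    -- r-convexity of the couple, expressed via the K-functional
    (hKconv : ∀ (n : ℕ) (x : Fin n → α → ℝ) (t : ℝ), 0 < t →
      K t (fun a => (∑ i, |x i a| ^ r) ^ (1 / r)) ≤
        MS * (∑ i, K t (x i) ^ r) ^ (1 / r))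
    (NE : (ℝ → ℝ) → ℝ)
    (hNEmono : ∀ f g : ℝ → ℝ, (∀ t : ℝ, 0 < t → |f t| ≤ |g t|) → NE f ≤ NE g)
    (hNEhom : ∀ c : ℝ, 0 ≤ c → ∀ f : ℝ → ℝ, NE (fun t => c * f t) = c * NE f)
    -- r-convexity of E with constant ME
    (hNEconv : ∀ (n : ℕ) (f : Fin n → ℝ → ℝ),
      NE (fun t => (∑ i, |f i t| ^ r) ^ (1 / r)) ≤
        ME * (∑ i, NE (f i) ^ r) ^ (1 / r)) :
    ∀ (n : ℕ) (x : Fin n → α → ℝ),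
      NE (fun t => K t (fun a => (∑ i, |x i a| ^ r) ^ (1 / r))) ≤
        MS * ME * (∑ i, NE (fun t => K t (x i)) ^ r) ^ (1 / r) := by
  intro n x
  have h1 : NE (fun t => K t (fun a => (∑ i, |x i a| ^ r) ^ (1 / r))) ≤
      NE (fun t => MS * (∑ i, |K t (x i)| ^ r) ^ (1 / r)) := by
    apply hNEmono
    intro t ht
    have hs : ∀ i : Fin n, K t (x i) ^ r = |K t (x i)| ^ r := fun i => by
      rw [abs_of_nonneg (hKnn t (x i))]
    have := hKconv n x t ht
    simp only [hs] at this
    calc |K t fun a => (∑ i, |x i a| ^ r) ^ (1 / r)|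
        = K t (fun a => (∑ i, |x i a| ^ r) ^ (1 / r)) := abs_of_nonneg (hKnn t _)
      _ ≤ MS * (∑ i, |K t (x i)| ^ r) ^ (1 / r) := this
      _ ≤ |MS * (∑ i, |K t (x i)| ^ r) ^ (1 / r)| := le_abs_self _
  have h2 : NE (fun t => MS * (∑ i, |K t (x i)| ^ r) ^ (1 / r)) =
      MS * NE (fun t => (∑ i, |K t (x i)| ^ r) ^ (1 / r)) := hNEhom MS hMS _
  have h3 := hNEconv n (fun i => fun t => K t (x i))
  calc NE (fun t => K t (fun a => (∑ i, |x i a| ^ r) ^ (1 / r)))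
      ≤ MS * NE (fun t => (∑ i, |K t (x i)| ^ r) ^ (1 / r)) := h1.trans h2.le
    _ ≤ MS * (ME * (∑ i, NE (fun t => K t (x i)) ^ r) ^ (1 / r)) :=
        mul_le_mul_of_nonneg_left h3 hMS
    _ = MS * ME * (∑ i, NE (fun t => K t (x i)) ^ r) ^ (1 / r) := by ring
end

section
/- Let 0 ≤ p < 1 ≤ q ≤ ∞, p < q. Then the couples (l^p, l^q) and (L^∞, L^∞(1/t)) do NOT have the uniform relative Calderón–Mityagin property. More precisely, there is no constant λ such that for every x ∈ l^q there exists a linear operator T bounded from l^p to L^∞ and from l^q to L^∞(1/t) with norms at most λ and T(x) = K(·, x; l^p, l^q): otherwise one would get ‖x‖_{l^p} ≤ λ‖x‖_{l^1} for all x ∈ l^p, which fails for p < 1. -/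
/-- The `ℓ^p` quasi-norm of a sequence, `0 < p < ∞`. -/
noncomputable def lpNorm (p : ℝ) (x : ℕ → ℝ) : ℝ :=
  (∑' k, |x k| ^ p) ^ (1 / p)

/-- The K-functional of the couple `(ℓ^p, ℓ^q)`. -/
noncomputable def Klp (p q t : ℝ) (x : ℕ → ℝ) : ℝ :=
  sInf {r : ℝ | ∃ x0 x1 : ℕ → ℝ, x = x0 + x1 ∧
    Summable (fun k => |x0 k| ^ p) ∧ Summable (fun k => |x1 k| ^ q) ∧
    r = lpNorm p x0 + t * lpNorm q x1}

lemma lpNorm_nonneg (r : ℝ) (y : ℕ → ℝ) : 0 ≤ lpNorm r y := by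
  unfold lpNorm
  exact Real.rpow_nonneg (tsum_nonneg fun k => Real.rpow_nonneg (abs_nonneg _) _) _

lemma aux_lp_lower (r : ℝ) (hr : 0 < r) (y : ℕ → ℝ) (hs : Summable (fun k => |y k| ^ r))
    (S : Finset ℕ) (hS : ∀ k ∈ S, (1:ℝ)/2 ≤ |y k|) :
    (S.card : ℝ) ^ (1/r) / 2 ≤ lpNorm r y := by
  have h1 : (S.card : ℝ) * (1/2 : ℝ) ^ r ≤ ∑' k, |y k| ^ r := by
    calc (S.card : ℝ) * (1/2 : ℝ) ^ r = ∑ _k ∈ S, (1/2 : ℝ) ^ r := by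
          rw [Finset.sum_const, nsmul_eq_mul]
      _ ≤ ∑ k ∈ S, |y k| ^ r :=
          Finset.sum_le_sum fun k hk => Real.rpow_le_rpow (by norm_num) (hS k hk) hr.le
      _ ≤ ∑' k, |y k| ^ r :=
          Summable.sum_le_tsum S (fun k _ => Real.rpow_nonneg (abs_nonneg _) r) hs
  have h2 : ((S.card : ℝ) * (1/2 : ℝ) ^ r) ^ (1/r) ≤ lpNorm r y := by
    unfold lpNorm
    exact Real.rpow_le_rpow (by positivity) h1 (by positivity)
  calc (S.card : ℝ) ^ (1/r) / 2
      = ((S.card : ℝ) * (1/2 : ℝ) ^ r) ^ (1/r) := by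
        rw [Real.mul_rpow (by positivity) (by positivity),
          ← Real.rpow_mul (by norm_num : (0:ℝ) ≤ 1/2), mul_one_div_cancel hr.ne',
          Real.rpow_one, div_eq_mul_inv, one_div]
        norm_num
    _ ≤ lpNorm r y := h2

/-- Let `0 < p < 1 ≤ q`. Then the couples `(ℓ^p, ℓ^q)` and
`(L^∞, L^∞(1/t))` do NOT have the uniform relative Calderón–Mityagin property:
there is no constant `λ > 0` such that for every `x ∈ ℓ^q` there is a linear
operator `T`, bounded from `ℓ^p` to `L^∞` and from `ℓ^q` to `L^∞(1/t)` with
norms at most `λ`, satisfying `T x = K(·, x; ℓ^p, ℓ^q)`. (Otherwise one would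
get `‖x‖_{ℓ^p} ≤ λ ‖x‖_{ℓ^1}` for all `x ∈ ℓ^p`, which fails for `p < 1`.) -/
theorem no_uniform_relative_CalderonMityagin (p q : ℝ)
    (hp0 : 0 < p) (hp1 : p < 1) (hq : 1 ≤ q) :
    ¬ ∃ lam : ℝ, 0 < lam ∧
      ∀ x : ℕ → ℝ, Summable (fun k => |x k| ^ q) →
        ∃ T : (ℕ → ℝ) →ₗ[ℝ] (ℝ → ℝ),
          (∀ y : ℕ → ℝ, Summable (fun k => |y k| ^ p) →
            ∀ t : ℝ, 0 < t → |T y t| ≤ lam * lpNorm p y) ∧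
          (∀ y : ℕ → ℝ, Summable (fun k => |y k| ^ q) →
            ∀ t : ℝ, 0 < t → |T y t| ≤ lam * t * lpNorm q y) ∧
          (∀ t : ℝ, 0 < t → T x t = Klp p q t x) := by
  rintro ⟨lam, hlam, h⟩
  have hq0 : 0 < q := lt_of_lt_of_le one_pos hq
  have hc : 0 < 1/p - 1 := by
    have : 1 < 1/p := one_lt_one_div hp0 hp1
    linarith
  obtain ⟨N, hN⟩ := Filter.eventually_atTop.mp
    (((tendsto_rpow_atTop hc).comp tendsto_natCast_atTop_atTop).eventually_gt_atTop (4*lam))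
  set m : ℕ := max N 1 with hm
  have hm1 : 1 ≤ m := le_max_right _ _
  have hmlam : 4*lam < (m:ℝ) ^ (1/p - 1) := hN m (le_max_left _ _)
  have hmpos : (0:ℝ) < m := by exact_mod_cast hm1
  set n : ℕ := 2*m with hn
  set x : ℕ → ℝ := fun k => if k < n then 1 else 0 with hx
  have hxp : Summable (fun k => |x k| ^ p) := by
    apply summable_of_ne_finset_zero (s := Finset.range n)
    intro k hk
    have : x k = 0 := if_neg (by simpa using hk)
    rw [this, abs_zero, Real.zero_rpow hp0.ne']
  have hxq : Summable (fun k => |x k| ^ q) := by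
    apply summable_of_ne_finset_zero (s := Finset.range n)
    intro k hk
    have : x k = 0 := if_neg (by simpa using hk)
    rw [this, abs_zero, Real.zero_rpow hq0.ne']
  obtain ⟨T, hTp, hTq, hTx⟩ := h x hxq
  set t : ℝ := (m:ℝ) ^ (1/p) with ht
  have htpos : 0 < t := Real.rpow_pos_of_pos hmpos _
  -- Upper bound: T x t ≤ lam * n
  have hx_sum : x = ∑ j ∈ Finset.range n, (Pi.single j 1 : ℕ → ℝ) := by
    funext k
    simp [hx, Finset.sum_apply, Pi.single_apply, Finset.sum_ite_eq, Finset.mem_range]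
  have hTe : ∀ j : ℕ, |T (Pi.single j 1) t| ≤ lam := by
    intro j
    have hsum : Summable (fun k => |(Pi.single j 1 : ℕ → ℝ) k| ^ p) := by
      apply summable_of_ne_finset_zero (s := {j})
      intro k hk
      have : (Pi.single j 1 : ℕ → ℝ) k = 0 := Pi.single_eq_of_ne (by simpa using hk) 1
      rw [this, abs_zero, Real.zero_rpow hp0.ne']
    have hnorm : lpNorm p ((Pi.single j 1 : ℕ → ℝ)) = 1 := by
      unfold lpNorm
      have heq : (fun k => |(Pi.single j 1 : ℕ → ℝ) k| ^ p) = fun k => if k = j then 1 else 0 := by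
        funext k
        by_cases hk : k = j <;>
          simp [hk, Pi.single_apply, Real.one_rpow, Real.zero_rpow hp0.ne']
      rw [heq, tsum_ite_eq, Real.one_rpow]
    have := hTp _ hsum t htpos
    rwa [hnorm, mul_one] at this
  have hupper : T x t ≤ lam * n := by
    have hmap : T x = ∑ j ∈ Finset.range n, T (Pi.single j 1) := by
      rw [hx_sum]; exact map_sum T _ _
    calc T x t ≤ |T x t| := le_abs_self _
      _ = |∑ j ∈ Finset.range n, T (Pi.single j 1) t| := by
          rw [hmap, Finset.sum_apply]
      _ ≤ ∑ j ∈ Finset.range n, |T (Pi.single j 1) t| := Finset.abs_sum_le_sum_abs _ _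
      _ ≤ ∑ _j ∈ Finset.range n, lam := Finset.sum_le_sum fun j _ => hTe j
      _ = lam * n := by rw [Finset.sum_const, Finset.card_range, nsmul_eq_mul, mul_comm]
  -- Lower bound on the K-functional
  have hlow : (m:ℝ) ^ (1/p) / 2 ≤ Klp p q t x := by
    apply le_csInf
    · refine ⟨lpNorm p x + t * lpNorm q 0, x, 0, by simp, hxp, ?_, rfl⟩
      have : (fun k => |(0:ℕ → ℝ) k| ^ q) = fun _ => (0:ℝ) := by
        funext k; simp [Real.zero_rpow hq0.ne']
      rw [this]; exact summable_zero
    · rintro r ⟨x0, x1, hdecomp, hs0, hs1, hr⟩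
      set A := (Finset.range n).filter (fun k => (1:ℝ)/2 ≤ |x0 k|) with hA
      set B := (Finset.range n).filter (fun k => ¬ (1:ℝ)/2 ≤ |x0 k|) with hB
      have hAB : A.card + B.card = n := by
        rw [hA, hB, Finset.card_filter_add_card_filter_not, Finset.card_range]
      have hB1 : ∀ k ∈ B, (1:ℝ)/2 ≤ |x1 k| := by
        intro k hk
        obtain ⟨hk1, hk2⟩ := Finset.mem_filter.mp hk
        have hxk : x k = 1 := if_pos (Finset.mem_range.mp hk1)
        have hsum : x0 k + x1 k = 1 := by
          have := congrFun hdecomp k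
          simp only [Pi.add_apply] at this
          rw [← this, hxk]
        push_neg at hk2
        have htri : (1:ℝ) ≤ |x0 k| + |x1 k| := by
          calc (1:ℝ) = |x0 k + x1 k| := by rw [hsum]; simp
            _ ≤ |x0 k| + |x1 k| := abs_add_le _ _
        linarith
      have hA1 : ∀ k ∈ A, (1:ℝ)/2 ≤ |x0 k| := by
        intro k hk; exact (Finset.mem_filter.mp hk).2
      have h0 : 0 ≤ lpNorm p x0 := lpNorm_nonneg _ _
      have h1 : 0 ≤ lpNorm q x1 := lpNorm_nonneg _ _
      rcases le_or_gt m A.card with hcase | hcase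
      · -- many big coordinates in x0
        have hlp : (m:ℝ) ^ (1/p) / 2 ≤ lpNorm p x0 := by
          calc (m:ℝ) ^ (1/p) / 2 ≤ (A.card : ℝ) ^ (1/p) / 2 := by
                have hmc : (m:ℝ) ≤ A.card := by exact_mod_cast hcase
                gcongr
            _ ≤ lpNorm p x0 := aux_lp_lower p hp0 x0 hs0 A hA1
        rw [hr]
        nlinarith [mul_nonneg htpos.le h1]
      · -- many big coordinates in x1
        have hBcard : m ≤ B.card := by omega
        have hlq : (1:ℝ)/2 ≤ lpNorm q x1 := by
          calc (1:ℝ)/2 ≤ (m:ℝ) ^ (1/q) / 2 := by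
                have : (1:ℝ) ≤ (m:ℝ) ^ (1/q) :=
                  Real.one_le_rpow (by exact_mod_cast hm1) (by positivity)
                linarith
            _ ≤ (B.card : ℝ) ^ (1/q) / 2 := by
                have hmc : (m:ℝ) ≤ B.card := by exact_mod_cast hBcard
                gcongr
            _ ≤ lpNorm q x1 := aux_lp_lower q hq0 x1 hs1 B hB1
        have : (m:ℝ) ^ (1/p) / 2 ≤ t * lpNorm q x1 := by
          calc (m:ℝ) ^ (1/p) / 2 = t * (1/2) := by rw [ht]; ring
            _ ≤ t * lpNorm q x1 := by gcongr
        rw [hr]; linarith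
  -- Contradiction
  have hKeq : T x t = Klp p q t x := hTx t htpos
  have hfinal : (m:ℝ) ^ (1/p) / 2 ≤ lam * n := by
    calc (m:ℝ) ^ (1/p) / 2 ≤ Klp p q t x := hlow
      _ = T x t := hKeq.symm
      _ ≤ lam * n := hupper
  have hsplit : (m:ℝ) ^ (1/p) = (m:ℝ) * (m:ℝ) ^ (1/p - 1) := by
    have h := Real.rpow_add hmpos 1 (1/p - 1)
    rw [Real.rpow_one] at h
    rw [show (1:ℝ) + (1/p - 1) = 1/p by ring] at h
    exact h
  have hncast : (n:ℝ) = 2 * m := by rw [hn]; push_cast; ring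
  rw [hsplit, hncast] at hfinal
  nlinarith [hmlam, hmpos, hfinal]
end
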